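/- Let X ∈ ℝ^{n×p} with rank(X) = n and p > n, Y ∈ ℝ^n, Σ̂ = X^T X/n, and B = X X^T/n (invertible). For λ ≠ 0 in a punctured neighborhood of 0, let GCV(λ) = [(1/n) ‖Y − X β̂_λ‖²] / [(1 − tr(S_λ)/n)²], where β̂_λ = (Σ̂ + λ I_p)^+ (1/n) X^T Y and S_λ = X (Σ̂ + λ I_p)^+ (1/n) X^T. Then the limit lim_{λ → 0} GCV(λ) exists and equals [(1/n) Y^T B^{-2} Y] / [((1/n) tr(Σ̂^+))²], and moreover (1/n) tr(Σ̂^+) = (1/n) tr(B^{-1}). -/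

import Mathlib

open Matrix Filter Topology

/-- The Penrose conditions: `P` is the Moore–Penrose pseudoinverse of `A`. -/
def IsMoorePenrose {m k : ℕ} (A : Matrix (Fin m) (Fin k) ℝ) (P : Matrix (Fin k) (Fin m) ℝ) :
    Prop :=
  A * P * A = A ∧ P * A * P = P ∧ (A * P)ᵀ = A * P ∧ (P * A)ᵀ = P * A

/-- The Moore–Penrose pseudoinverse of a real matrix (it exists and is unique, so the
choice below picks out the genuine pseudoinverse). -/
noncomputable def mpinv {m k : ℕ} (A : Matrix (Fin m) (Fin k) ℝ) : Matrix (Fin k) (Fin m) ℝ :=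
  haveI := Classical.propDecidable (∃ P, IsMoorePenrose A P)
  if h : ∃ P, IsMoorePenrose A P then h.choose else 0

lemma mp_unique {m k : ℕ} {A : Matrix (Fin m) (Fin k) ℝ} {P Q : Matrix (Fin k) (Fin m) ℝ}
    (hP : IsMoorePenrose A P) (hQ : IsMoorePenrose A Q) : P = Q := by
  obtain ⟨hP1, hP2, hP3, hP4⟩ := hP
  obtain ⟨hQ1, hQ2, hQ3, hQ4⟩ := hQ
  have hT1 : Aᵀ = Q * A * Aᵀ := by
    conv_lhs => rw [← hQ1]
    rw [Matrix.mul_assoc, Matrix.transpose_mul, hQ4]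
  have hT2 : Aᵀ = Aᵀ * (A * Q) := by
    conv_lhs => rw [← hQ1]
    rw [Matrix.transpose_mul, hQ3]
  have hPA : P * A = Q * A := by
    calc P * A = (P * A)ᵀ := hP4.symm
    _ = Aᵀ * Pᵀ := by rw [Matrix.transpose_mul]
    _ = Q * A * Aᵀ * Pᵀ := by rw [← hT1]
    _ = Q * A * (P * A)ᵀ := by rw [Matrix.transpose_mul, Matrix.mul_assoc, Matrix.mul_assoc]
    _ = Q * (A * (P * A)) := by rw [hP4, Matrix.mul_assoc]
    _ = Q * A := by rw [← Matrix.mul_assoc A P A, hP1]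
  have hAP : A * P = A * Q := by
    calc A * P = (A * P)ᵀ := hP3.symm
    _ = Pᵀ * Aᵀ := by rw [Matrix.transpose_mul]
    _ = Pᵀ * (Aᵀ * (A * Q)) := by rw [← hT2]
    _ = (A * P)ᵀ * (A * Q) := by rw [Matrix.transpose_mul, Matrix.mul_assoc]
    _ = A * P * (A * Q) := by rw [hP3]
    _ = A * Q := by rw [← Matrix.mul_assoc, hP1]
  calc P = P * A * P := hP2.symm
  _ = P * (A * Q) := by rw [Matrix.mul_assoc, hAP]
  _ = Q * A * Q := by rw [← Matrix.mul_assoc, hPA]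
  _ = Q := hQ2

lemma mpinv_eq {m k : ℕ} {A : Matrix (Fin m) (Fin k) ℝ} {P : Matrix (Fin k) (Fin m) ℝ}
    (h : IsMoorePenrose A P) : mpinv A = P := by
  unfold mpinv
  have hex : ∃ Q, IsMoorePenrose A Q := ⟨P, h⟩
  rw [dif_pos hex]
  exact mp_unique hex.choose_spec h

lemma isMP_inv {m : ℕ} {A : Matrix (Fin m) (Fin m) ℝ} (h : IsUnit A.det) :
    IsMoorePenrose A A⁻¹ := by
  refine ⟨?_, ?_, ?_, ?_⟩ <;>
    simp [Matrix.mul_nonsing_inv A h, Matrix.nonsing_inv_mul A h]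

lemma sigma_mp {n p : ℕ} (hn : (n:ℝ) ≠ 0) (X : Matrix (Fin n) (Fin p) ℝ)
    (hB : IsUnit ((n:ℝ)⁻¹ • (X * Xᵀ)).det) :
    IsMoorePenrose ((n:ℝ)⁻¹ • (Xᵀ * X))
      ((n:ℝ)⁻¹ • (Xᵀ * ((((n:ℝ)⁻¹ • (X * Xᵀ))⁻¹) * (((n:ℝ)⁻¹ • (X * Xᵀ))⁻¹)) * X)) := by
  set c : ℝ := (n:ℝ)⁻¹ with hc
  have hc0 : c ≠ 0 := inv_ne_zero hn
  set B : Matrix (Fin n) (Fin n) ℝ := c • (X * Xᵀ) with hBdef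
  have hXX : X * Xᵀ = c⁻¹ • B := by rw [hBdef, smul_smul, inv_mul_cancel₀ hc0, one_smul]
  have hBt : Bᵀ = B := by
    rw [hBdef, Matrix.transpose_smul, Matrix.transpose_mul, Matrix.transpose_transpose]
  have hBit : (B⁻¹)ᵀ = B⁻¹ := by rw [Matrix.transpose_nonsing_inv, hBt]
  have hstep : ∀ (k : ℕ) (M : Matrix (Fin n) (Fin k) ℝ), X * (Xᵀ * M) = c⁻¹ • (B * M) := by
    intro k M; rw [← Matrix.mul_assoc, hXX, Matrix.smul_mul]
  have hBstep : ∀ (k : ℕ) (M : Matrix (Fin n) (Fin k) ℝ), B * (B⁻¹ * M) = M := by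
    intro k M; rw [← Matrix.mul_assoc, Matrix.mul_nonsing_inv _ hB, Matrix.one_mul]
  have hBstep' : ∀ (k : ℕ) (M : Matrix (Fin n) (Fin k) ℝ), B⁻¹ * (B * M) = M := by
    intro k M; rw [← Matrix.mul_assoc, Matrix.nonsing_inv_mul _ hB, Matrix.one_mul]
  refine ⟨?_, ?_, ?_, ?_⟩
  · simp only [Matrix.smul_mul, Matrix.mul_smul, smul_smul, Matrix.mul_assoc, hstep, hBstep,
      hBstep']
    match_scalars; field_simp
  · simp only [Matrix.smul_mul, Matrix.mul_smul, smul_smul, Matrix.mul_assoc, hstep, hBstep,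
      hBstep']
    match_scalars; field_simp
  · simp only [Matrix.smul_mul, Matrix.mul_smul, smul_smul, Matrix.mul_assoc, hstep, hBstep,
      hBstep', Matrix.transpose_smul, Matrix.transpose_mul, Matrix.transpose_transpose, hBit]
  · simp only [Matrix.smul_mul, Matrix.mul_smul, smul_smul, Matrix.mul_assoc, hstep, hBstep,
      hBstep', Matrix.transpose_smul, Matrix.transpose_mul, Matrix.transpose_transpose, hBit]

lemma det_unit_of_rank {n : ℕ} (M : Matrix (Fin n) (Fin n) ℝ) (h : M.rank = n) :
    IsUnit M.det := by
  rw [← Matrix.isUnit_iff_isUnit_det, ← Matrix.mulVec_surjective_iff_isUnit]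
  have htop : LinearMap.range M.mulVecLin = ⊤ := by
    apply Submodule.eq_top_of_finrank_eq
    rw [← Matrix.rank, h]
    simp
  intro y
  obtain ⟨x, hx⟩ := LinearMap.range_eq_top.mp htop y
  exact ⟨x, hx⟩

lemma trace_inv_pos {n : ℕ} (hn : 0 < n) {p : ℕ} (X : Matrix (Fin n) (Fin p) ℝ)
    (hB : IsUnit ((n:ℝ)⁻¹ • (X * Xᵀ)).det) :
    0 < (((n:ℝ)⁻¹ • (X * Xᵀ))⁻¹).trace := by
  set c : ℝ := (n:ℝ)⁻¹ with hc
  have hcpos : 0 < c := by positivity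
  set B : Matrix (Fin n) (Fin n) ℝ := c • (X * Xᵀ) with hBdef
  have hBpd : B.PosDef := by
    refine Matrix.PosDef.of_dotProduct_mulVec_pos ?_ ?_
    · rw [Matrix.IsHermitian, conjTranspose_eq_transpose_of_trivial, hBdef,
        Matrix.transpose_smul, Matrix.transpose_mul, Matrix.transpose_transpose]
    · intro x hx
      have hXx : Xᵀ *ᵥ x ≠ 0 := by
        intro h0
        apply hx
        have hinj := Matrix.mulVec_injective_iff_isUnit.mpr
          ((Matrix.isUnit_iff_isUnit_det B).mpr hB)
        apply hinj
        rw [hBdef, Matrix.smul_mulVec, ← Matrix.mulVec_mulVec, h0]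
        simp
      have : star x ⬝ᵥ B *ᵥ x = c * ((Xᵀ *ᵥ x) ⬝ᵥ (Xᵀ *ᵥ x)) := by
        rw [hBdef, Matrix.smul_mulVec, dotProduct_smul, ← Matrix.mulVec_mulVec]
        congr 1
        rw [star_trivial, Matrix.dotProduct_mulVec x X, ← Matrix.mulVec_transpose]
      rw [this]
      have hnn : 0 ≤ (Xᵀ *ᵥ x) ⬝ᵥ (Xᵀ *ᵥ x) := by
        simpa using dotProduct_star_self_nonneg (Xᵀ *ᵥ x)
      have : 0 < (Xᵀ *ᵥ x) ⬝ᵥ (Xᵀ *ᵥ x) := by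
        rcases hnn.lt_or_eq with h | h
        · exact h
        · exact absurd (dotProduct_self_eq_zero.mp h.symm) hXx
      positivity
  have hipd : (B⁻¹).PosDef := hBpd.inv
  rw [Matrix.trace]
  apply Finset.sum_pos
  · intro i _
    have := hipd.dotProduct_mulVec_pos (x := Pi.single i 1) (by
      intro h; simpa using congr_fun h i)
    simpa [Matrix.diag, Matrix.mulVec_single, dotProduct, Pi.single_apply,
      Finset.sum_ite_eq] using this
  · exact ⟨⟨0, hn⟩, Finset.mem_univ _⟩

/-- For `rank X = n`, `p > n`, the GCV criterion
`GCV(λ) = [(1/n)‖Y − Xβ̂_λ‖²]/(1 − tr(S_λ)/n)²` has a limit as `λ → 0` (through `λ ≠ 0`),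
namely `[(1/n) Yᵀ B⁻² Y]/((1/n) tr(Σ̂⁺))²`, and `(1/n) tr(Σ̂⁺) = (1/n) tr(B⁻¹)`. -/
theorem gcv_at_zero_limit {n p : ℕ} (hn : 0 < n) (hnp : n < p)
    (X : Matrix (Fin n) (Fin p) ℝ) (hrank : X.rank = n) (Y : Fin n → ℝ) :
    Tendsto (fun lam : ℝ =>
        ((n : ℝ)⁻¹ * ∑ i, (Y i -
            (X *ᵥ (mpinv ((n : ℝ)⁻¹ • (Xᵀ * X) + lam • 1) *ᵥ ((n : ℝ)⁻¹ • (Xᵀ *ᵥ Y)))) i) ^ 2) /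
          (1 - (X * mpinv ((n : ℝ)⁻¹ • (Xᵀ * X) + lam • 1) *
            ((n : ℝ)⁻¹ • Xᵀ)).trace / (n : ℝ)) ^ 2)
      (𝓝[≠] 0)
      (𝓝 (((n : ℝ)⁻¹ * (Y ⬝ᵥ
          ((((n : ℝ)⁻¹ • (X * Xᵀ))⁻¹) * (((n : ℝ)⁻¹ • (X * Xᵀ))⁻¹)) *ᵥ Y)) /
        ((n : ℝ)⁻¹ * (mpinv ((n : ℝ)⁻¹ • (Xᵀ * X))).trace) ^ 2)) ∧
    (n : ℝ)⁻¹ * (mpinv ((n : ℝ)⁻¹ • (Xᵀ * X))).trace =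
      (n : ℝ)⁻¹ * ((((n : ℝ)⁻¹ • (X * Xᵀ))⁻¹).trace) := by
  have hcn : (n:ℝ) ≠ 0 := Nat.cast_ne_zero.mpr hn.ne'
  set c : ℝ := (n:ℝ)⁻¹ with hc
  have hc0 : c ≠ 0 := inv_ne_zero hcn
  set Sig : Matrix (Fin p) (Fin p) ℝ := c • (Xᵀ * X) with hSig
  set B : Matrix (Fin n) (Fin n) ℝ := c • (X * Xᵀ) with hBdef
  -- B is invertible
  have hBrank : (X * Xᵀ).rank = n := by rw [Matrix.rank_self_mul_transpose, hrank]
  have hNdet : IsUnit (X * Xᵀ).det := det_unit_of_rank _ hBrank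
  have hBdet : IsUnit B.det := by
    rw [hBdef, Matrix.det_smul]
    exact (IsUnit.pow _ (isUnit_iff_ne_zero.mpr hc0)).mul hNdet
  -- the trace identity (second conjunct)
  have hmpSig : mpinv Sig = c • (Xᵀ * (B⁻¹ * B⁻¹) * X) := mpinv_eq (sigma_mp hcn X hBdet)
  have hXX : X * Xᵀ = c⁻¹ • B := by rw [hBdef, smul_smul, inv_mul_cancel₀ hc0, one_smul]
  have htrace_eq : (mpinv Sig).trace = B⁻¹.trace := by
    rw [hmpSig, Matrix.trace_smul, Matrix.trace_mul_comm, ← Matrix.mul_assoc, hXX,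
      Matrix.smul_mul, ← Matrix.mul_assoc, Matrix.mul_nonsing_inv _ hBdet, Matrix.one_mul,
      Matrix.trace_smul, smul_smul, mul_inv_cancel₀ hc0, one_smul]
  refine ⟨?_, by rw [htrace_eq]⟩
  -- positivity of the trace, denominator is nonzero
  have htpos : 0 < B⁻¹.trace := trace_inv_pos hn X hBdet
  have hden0 : c * B⁻¹.trace ≠ 0 := by positivity
  -- the comparison function
  set g : ℝ → ℝ := fun lam =>
    (c * (Y ⬝ᵥ ((B + lam • 1)⁻¹ * (B + lam • 1)⁻¹) *ᵥ Y)) /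
      (c * ((B + lam • 1)⁻¹).trace) ^ 2 with hg
  -- continuity of g at 0
  have hC0 : B + (0:ℝ) • 1 = B := by simp
  have hCcont : Continuous fun lam : ℝ => B + lam • (1 : Matrix (Fin n) (Fin n) ℝ) :=
    continuous_const.add (continuous_id.smul continuous_const)
  have hInv : ContinuousAt Inv.inv B :=
    continuousAt_matrix_inv B (NormedRing.inverse_continuousAt hBdet.unit)
  have hCinv : ContinuousAt (fun lam : ℝ => (B + lam • 1)⁻¹) 0 := by
    have hInv' : ContinuousAt Inv.inv (B + (0:ℝ) • 1) := by rw [hC0]; exact hInv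
    exact ContinuousAt.comp (g := Inv.inv) (x := (0:ℝ)) hInv' hCcont.continuousAt
  have hnum : ContinuousAt (fun lam : ℝ =>
      c * (Y ⬝ᵥ ((B + lam • 1)⁻¹ * (B + lam • 1)⁻¹) *ᵥ Y)) 0 := by
    have h2 : Continuous fun M : Matrix (Fin n) (Fin n) ℝ => c * (Y ⬝ᵥ (M * M) *ᵥ Y) :=
      continuous_const.mul (continuous_const.dotProduct
        ((continuous_id.matrix_mul continuous_id).matrix_mulVec continuous_const))
    exact h2.continuousAt.comp hCinv
  have hdenc : ContinuousAt (fun lam : ℝ => (c * ((B + lam • 1)⁻¹).trace) ^ 2) 0 := by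
    have h2 : Continuous fun M : Matrix (Fin n) (Fin n) ℝ => (c * M.trace) ^ 2 :=
      (continuous_const.mul (continuous_id.matrix_trace)).pow 2
    exact h2.continuousAt.comp hCinv
  have hgcont : ContinuousAt g 0 := by
    apply hnum.div hdenc
    simp only [hC0]
    exact pow_ne_zero 2 hden0
  have hg0 : g 0 = (c * (Y ⬝ᵥ (B⁻¹ * B⁻¹) *ᵥ Y)) / (c * (mpinv Sig).trace) ^ 2 := by
    rw [hg, htrace_eq]
    simp [hC0]
  -- eventually, things are nice
  have hdetcont : Continuous fun lam : ℝ => (B + lam • 1).det := hCcont.matrix_det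
  have hev1 : ∀ᶠ lam : ℝ in 𝓝 0, (B + lam • 1).det ≠ 0 := by
    have : ContinuousAt (fun lam : ℝ => (B + lam • 1).det) 0 := hdetcont.continuousAt
    have hne : (B + (0:ℝ) • 1).det ≠ 0 := by rw [hC0]; exact hBdet.ne_zero
    exact this.eventually_ne hne
  have hev : ∀ᶠ lam : ℝ in 𝓝[≠] 0, (fun lam : ℝ =>
        (c * ∑ i, (Y i -
            (X *ᵥ (mpinv (Sig + lam • 1) *ᵥ (c • (Xᵀ *ᵥ Y)))) i) ^ 2) /
          (1 - (X * mpinv (Sig + lam • 1) * (c • Xᵀ)).trace / (n : ℝ)) ^ 2) lam = g lam := by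
    filter_upwards [eventually_nhdsWithin_of_eventually_nhds hev1, self_mem_nhdsWithin]
      with lam hdet (hlam : lam ≠ 0)
    set C : Matrix (Fin n) (Fin n) ℝ := B + lam • 1 with hCdef
    have hCunit : IsUnit C.det := isUnit_iff_ne_zero.mpr hdet
    have hcomm : X * (Sig + lam • 1) = C * X := by
      rw [hSig, hCdef, Matrix.mul_add, Matrix.add_mul, hBdef]
      congr 1
      · rw [Matrix.mul_smul, Matrix.smul_mul, ← Matrix.mul_assoc]
      · rw [Matrix.mul_smul, Matrix.smul_mul, Matrix.mul_one, Matrix.one_mul]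
    -- Sig + lam•1 is invertible
    have hAdet : IsUnit (Sig + lam • 1).det := by
      rw [isUnit_iff_ne_zero]
      intro h0
      obtain ⟨v, hv, hv0⟩ := (Matrix.exists_mulVec_eq_zero_iff).mpr h0
      have hXv : C *ᵥ (X *ᵥ v) = 0 := by
        rw [Matrix.mulVec_mulVec, ← hcomm, ← Matrix.mulVec_mulVec, hv0, Matrix.mulVec_zero]
      have hXv0 : X *ᵥ v = 0 := by
        have hinj := Matrix.mulVec_injective_iff_isUnit.mpr
          ((Matrix.isUnit_iff_isUnit_det C).mpr hCunit)
        apply hinj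
        rw [hXv, Matrix.mulVec_zero]
      have hSv : (Sig + lam • 1) *ᵥ v = lam • v := by
        rw [Matrix.add_mulVec, hSig, Matrix.smul_mulVec, ← Matrix.mulVec_mulVec, hXv0]
        simp [Matrix.smul_mulVec]
      rw [hv0] at hSv
      exact hv (by simpa [hlam, eq_comm, smul_eq_zero] using hSv.symm)
    have hMP : mpinv (Sig + lam • 1) = (Sig + lam • 1)⁻¹ := mpinv_eq (isMP_inv hAdet)
    have hXAinv : X * (Sig + lam • 1)⁻¹ = C⁻¹ * X := by
      calc X * (Sig + lam • 1)⁻¹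
          = C⁻¹ * (C * (X * (Sig + lam • 1)⁻¹)) := by
            rw [← Matrix.mul_assoc, Matrix.nonsing_inv_mul _ hCunit, Matrix.one_mul]
      _ = C⁻¹ * (X * (Sig + lam • 1) * (Sig + lam • 1)⁻¹) := by
            rw [hcomm, Matrix.mul_assoc]
      _ = C⁻¹ * X := by
            rw [Matrix.mul_assoc, Matrix.mul_nonsing_inv _ hAdet, Matrix.mul_one]
    have hS : X * (Sig + lam • 1)⁻¹ * (c • Xᵀ) = C⁻¹ * B := by
      rw [hXAinv, Matrix.mul_assoc, Matrix.mul_smul, ← hBdef]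
    have hCB : C⁻¹ * B = 1 - lam • C⁻¹ := by
      have hB' : B = C - lam • 1 := by rw [hCdef]; rw [add_sub_cancel_right]
      rw [hB', Matrix.mul_sub, Matrix.nonsing_inv_mul _ hCunit, Matrix.mul_smul, Matrix.mul_one]
    have hBt : Bᵀ = B := by
      rw [hBdef, Matrix.transpose_smul, Matrix.transpose_mul, Matrix.transpose_transpose]
    have hCt : Cᵀ = C := by
      rw [hCdef, Matrix.transpose_add, hBt, Matrix.transpose_smul, Matrix.transpose_one]
    have hCsym : (C⁻¹)ᵀ = C⁻¹ := by
      rw [Matrix.transpose_nonsing_inv, hCt]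
    -- the fitted vector
    have hfit : (X *ᵥ (mpinv (Sig + lam • 1) *ᵥ (c • (Xᵀ *ᵥ Y)))) = (C⁻¹ * B) *ᵥ Y := by
      rw [hMP, ← hS, show c • (Xᵀ *ᵥ Y) = (c • Xᵀ) *ᵥ Y from
        (Matrix.smul_mulVec c Xᵀ Y).symm, Matrix.mulVec_mulVec, Matrix.mulVec_mulVec,
        Matrix.mul_assoc]
    set w : Fin n → ℝ := C⁻¹ *ᵥ Y with hw
    have hres : ∀ i, Y i - ((C⁻¹ * B) *ᵥ Y) i = lam * w i := by
      intro i
      rw [hCB, Matrix.sub_mulVec, Matrix.one_mulVec, Matrix.smul_mulVec]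
      simp [hw]
    have hsum : ∑ i, (Y i - ((C⁻¹ * B) *ᵥ Y) i) ^ 2
        = lam ^ 2 * (Y ⬝ᵥ (C⁻¹ * C⁻¹) *ᵥ Y) := by
      have hww : Y ⬝ᵥ (C⁻¹ * C⁻¹) *ᵥ Y = w ⬝ᵥ w := by
        rw [← Matrix.mulVec_mulVec, ← hw, Matrix.dotProduct_mulVec, ← Matrix.mulVec_transpose,
          hCsym, ← hw]
      calc ∑ i, (Y i - ((C⁻¹ * B) *ᵥ Y) i) ^ 2 = ∑ i, (lam * w i) ^ 2 := by
            refine Finset.sum_congr rfl fun i _ => by rw [hres i]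
      _ = lam ^ 2 * (w ⬝ᵥ w) := by
            simp only [dotProduct, Finset.mul_sum, mul_pow]
            try exact Finset.sum_congr rfl fun i _ => by ring
      _ = lam ^ 2 * (Y ⬝ᵥ (C⁻¹ * C⁻¹) *ᵥ Y) := by rw [hww]

    -- trace computation
    have htr : (X * mpinv (Sig + lam • 1) * (c • Xᵀ)).trace = (n : ℝ) - lam * C⁻¹.trace := by
      rw [hMP, hS, hCB, Matrix.trace_sub, Matrix.trace_one, Matrix.trace_smul]
      simp [smul_eq_mul]
    have hden : 1 - (X * mpinv (Sig + lam • 1) * (c • Xᵀ)).trace / (n : ℝ)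
        = lam * (c * C⁻¹.trace) := by
      rw [htr, hc, sub_div, div_self hcn, div_eq_mul_inv]
      ring
    -- put it together
    rw [hfit] at *
    rw [hsum, hden, hg]
    rw [mul_pow]
    rw [show c * (lam ^ 2 * (Y ⬝ᵥ (C⁻¹ * C⁻¹) *ᵥ Y)) = lam ^ 2 * (c * (Y ⬝ᵥ (C⁻¹ * C⁻¹) *ᵥ Y))
      from by ring]
    rw [mul_div_mul_left _ _ (pow_ne_zero 2 hlam)]
  -- conclude
  have hgt : Tendsto g (𝓝[≠] 0) (𝓝 (g 0)) :=
    (hgcont.tendsto).mono_left nhdsWithin_le_nhds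
  rw [hg0] at hgt
  exact Tendsto.congr' (hev.mono fun lam h => h.symm) hgt
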